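/- Let D be a Dedekind domain with fraction field F, M a finitely generated projective D-module, and f : M → M a D-linear map with N ≥ 1 and d = r^s a power of a prime r in ℤ. Then Trace((f ⊗ id_F)^d) - (Trace(f ⊗ id_F))^d ∈ rD̄ ∩ F for D̄ the integral closure of D in an algebraic closure of F; in particular, if D is a ring of algebraic integers, Trace(f^d) ≡ (Trace f)^d modulo rD. -/

import Mathlib

/-!
In characteristic `p` the commuting pair `X, C A` satisfies `(X - C A) ^ p = X ^ p - C (A ^ p)`,
so `charpoly (A ^ p)` evaluated at `X ^ p` is `(charpoly A) ^ p`; comparing subleading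
coefficients gives `tr (A ^ p) = (tr A) ^ p`. Reducing modulo `p` and iterating, this yields
`p ∣ tr (A ^ p ^ s) - (tr A) ^ p ^ s` for matrices over any commutative ring. A finitely generated
projective module `M` is a retract `π ∘ σ = id` of some `Rⁿ`, and after base change to the fraction
field the trace of `f ^ k` (`k ≥ 1`) equals the trace of `(σ ∘ f ∘ π) ^ k` on `Rⁿ`. Hence the
difference of traces is `p` times the image of an element of the base ring.
-/

open Polynomial TensorProduct

namespace Matrix

variable {n : Type*} [DecidableEq n] [Fintype n] {R : Type*} [CommRing R]

theorem expand_charpoly_pow_char (p : ℕ) [Fact p.Prime] [CharP R p] [Nonempty n]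
    (A : Matrix n n R) : expand R p (A ^ p).charpoly = A.charpoly ^ p := by
  rw [charpoly, charpoly, AlgHom.map_det, ← coe_detMonoidHom, ← map_pow]
  congr 1
  apply matPolyEquiv.injective
  rw [map_pow, matPolyEquiv_charmatrix, sub_pow_char_of_commute p (C A).commute_X, ← C_pow]
  exact matPolyEquiv_eq_X_pow_sub_C p A

theorem trace_pow_char (p : ℕ) [hp : Fact p.Prime] [CharP R p] (A : Matrix n n R) :
    (A ^ p).trace = A.trace ^ p := by
  cases isEmpty_or_nonempty n
  · simp [trace, zero_pow hp.out.ne_zero]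
  -- `-trace` is the subleading coefficient, which `expand` moves to degree `p * (#n - 1)`
  have hcoeff := congrArg (coeff · (p * (Fintype.card n - 1))) (expand_charpoly_pow_char p A)
  simp only [coeff_expand_mul' hp.out.pos, ← map_frobenius_expand, coeff_map, frobenius_def]
    at hcoeff
  rw [trace_eq_neg_charpoly_coeff, trace_eq_neg_charpoly_coeff, hcoeff, neg_pow, neg_one_pow_char,
    neg_one_mul]

theorem trace_pow_char_pow (p : ℕ) [Fact p.Prime] [CharP R p] (A : Matrix n n R) (s : ℕ) :
    (A ^ p ^ s).trace = A.trace ^ p ^ s := by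
  induction s with
  | zero => simp
  | succ s ih => rw [pow_succ, pow_mul, trace_pow_char, ih, ← pow_mul]

theorem natCast_dvd_trace_pow_prime_pow_sub {p : ℕ} (hp : p.Prime) (A : Matrix n n R) (s : ℕ) :
    (p : R) ∣ (A ^ p ^ s).trace - A.trace ^ p ^ s := by
  rw [← Ideal.Quotient.eq_zero_iff_dvd]
  rcases subsingleton_or_nontrivial (R ⧸ Ideal.span {(p : R)}) with _ | _
  · exact Subsingleton.elim _ _
  have : Fact p.Prime := ⟨hp⟩
  have : CharP (R ⧸ Ideal.span {(p : R)}) p :=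
    (CharP.charP_iff_prime_eq_zero hp).2 <| by
      rw [← map_natCast (Ideal.Quotient.mk _), Ideal.Quotient.eq_zero_iff_dvd]
  rw [map_sub, map_pow, AddMonoidHom.map_trace, AddMonoidHom.map_trace, Matrix.map_pow,
    trace_pow_char_pow, sub_self]

end Matrix

namespace LinearMap

theorem natCast_dvd_trace_pow_prime_pow_sub {R M : Type*} [CommRing R] [AddCommGroup M]
    [Module R M] [Module.Free R M] [Module.Finite R M] {p : ℕ} (hp : p.Prime) (f : M →ₗ[R] M)
    (s : ℕ) : (p : R) ∣ trace R M (f ^ p ^ s) - trace R M f ^ p ^ s := by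
  classical
  let b := Module.Free.chooseBasis R M
  rw [trace_eq_matrix_trace R b, trace_eq_matrix_trace R b, ← toMatrix_pow]
  exact Matrix.natCast_dvd_trace_pow_prime_pow_sub hp _ s

section Retract

variable {R M N : Type*} [CommRing R] [AddCommGroup M] [Module R M] [AddCommGroup N] [Module R N]
  {π : N →ₗ[R] M} {σ : M →ₗ[R] N}

theorem comp_comp_pow_succ_of_comp_eq_id (hπσ : π ∘ₗ σ = id) (g : M →ₗ[R] M) (k : ℕ) :
    (σ ∘ₗ g ∘ₗ π) ^ (k + 1) = σ ∘ₗ (g ^ (k + 1)) ∘ₗ π := by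
  induction k with
  | zero => simp
  | succ k ih =>
    rw [pow_succ, ih, pow_succ _ (k + 1), Module.End.mul_eq_comp, Module.End.mul_eq_comp]
    ext x
    simp [← LinearMap.comp_apply π σ, hπσ]

theorem trace_comp_comp_of_comp_eq_id [Module.Free R M] [Module.Finite R M] [Module.Free R N]
    [Module.Finite R N] (hπσ : π ∘ₗ σ = id) (g : M →ₗ[R] M) :
    trace R N (σ ∘ₗ g ∘ₗ π) = trace R M g := by
  rw [trace_comp_comm', comp_assoc, hπσ, comp_id]

end Retract

theorem exists_trace_baseChange_pow_prime_pow_sub_eq {R A M : Type*} [CommRing R] [CommRing A]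
    [Algebra R A] [AddCommGroup M] [Module R M] [Module.Finite R M] [Module.Projective R M]
    [Module.Free A (A ⊗[R] M)] {p : ℕ} (hp : p.Prime) (f : M →ₗ[R] M) (s : ℕ) :
    ∃ c : R, trace A (A ⊗[R] M) (f.baseChange A ^ p ^ s) - trace A _ (f.baseChange A) ^ p ^ s =
      p * algebraMap R A c := by
  obtain ⟨n, π, hπ⟩ := Module.Finite.exists_fin' R M
  obtain ⟨σ, hπσ⟩ := Module.projective_lifting_property π id hπ
  have hπσA : π.baseChange A ∘ₗ σ.baseChange A = id := by
    rw [← baseChange_comp, hπσ, baseChange_id]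
  have htrace : ∀ k ≠ 0, trace A (A ⊗[R] M) (f.baseChange A ^ k) =
      algebraMap R A (trace R _ ((σ ∘ₗ f ∘ₗ π) ^ k)) := by
    intro k hk
    obtain ⟨k, rfl⟩ := Nat.exists_eq_add_one_of_ne_zero hk
    rw [comp_comp_pow_succ_of_comp_eq_id hπσ, ← trace_baseChange, baseChange_comp,
      baseChange_comp, trace_comp_comp_of_comp_eq_id hπσA, baseChange_pow]
  have htrace_one := htrace 1 one_ne_zero
  simp only [pow_one] at htrace_one
  obtain ⟨c, hc⟩ := natCast_dvd_trace_pow_prime_pow_sub hp (σ ∘ₗ f ∘ₗ π) s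
  refine ⟨c, ?_⟩
  rw [htrace _ (pow_ne_zero s hp.ne_zero), htrace_one, ← map_pow, ← map_sub, hc, map_mul,
    map_natCast]

end LinearMap

theorem trace_baseChange_pow_prime_pow_congruence_general
    (D : Type*) [CommRing D] [IsDomain D]
    (M : Type*) [AddCommGroup M] [Module D M]
    [Module.Finite D M] [Module.Projective D M]
    (f : M →ₗ[D] M) (r s : ℕ) (hr : r.Prime) :
    ∃ y : AlgebraicClosure (FractionRing D),
      (∃ q : Polynomial D, q.Monic ∧
        Polynomial.eval y
          ((q.map (algebraMap D (FractionRing D))).map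
            (algebraMap (FractionRing D) (AlgebraicClosure (FractionRing D)))) = 0) ∧
      algebraMap (FractionRing D) (AlgebraicClosure (FractionRing D))
          (LinearMap.trace (FractionRing D) _ ((f.baseChange (FractionRing D)) ^ (r ^ s)) -
            (LinearMap.trace (FractionRing D) _ (f.baseChange (FractionRing D))) ^ (r ^ s)) =
        (r : AlgebraicClosure (FractionRing D)) * y := by
  obtain ⟨c, hc⟩ :=
    LinearMap.exists_trace_baseChange_pow_prime_pow_sub_eq (A := FractionRing D) hr f s
  refine ⟨algebraMap _ _ (algebraMap D (FractionRing D) c), ⟨X - C c, monic_X_sub_C c, ?_⟩, ?_⟩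
  · simp
  · rw [hc, map_mul, map_natCast]

/-- Let `D` be a Dedekind domain with fraction field `F`, `M` a finitely generated
projective `D`-module, `f : M → M` a `D`-linear map, and `d = r^s` a prime power.
Then `Trace((f ⊗ id_F)^d) - (Trace(f ⊗ id_F))^d` lies in `r·D̄ ∩ F`, where `D̄` is
the integral closure of `D` in an algebraic closure of `F`: that is, in the
algebraic closure it equals `r` times an element integral over `D` (witnessed by a
monic polynomial over `D`). -/
theorem trace_baseChange_pow_prime_pow_congruence
    (D : Type*) [CommRing D] [IsDomain D] [IsDedekindDomain D]
    (M : Type*) [AddCommGroup M] [Module D M]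
    [Module.Finite D M] [Module.Projective D M]
    (f : M →ₗ[D] M) (r s : ℕ) (hr : r.Prime) (hs : 1 ≤ s) :
    ∃ y : AlgebraicClosure (FractionRing D),
      (∃ q : Polynomial D, q.Monic ∧
        Polynomial.eval y
          ((q.map (algebraMap D (FractionRing D))).map
            (algebraMap (FractionRing D) (AlgebraicClosure (FractionRing D)))) = 0) ∧
      algebraMap (FractionRing D) (AlgebraicClosure (FractionRing D))
          (LinearMap.trace (FractionRing D) _ ((f.baseChange (FractionRing D)) ^ (r ^ s)) -
            (LinearMap.trace (FractionRing D) _ (f.baseChange (FractionRing D))) ^ (r ^ s)) =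
        (r : AlgebraicClosure (FractionRing D)) * y :=
  trace_baseChange_pow_prime_pow_congruence_general D M f r s hr
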